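/- arXiv:2307.01031 — 5 statements merged into one kernel-verified Lean document; each statement's English description precedes it below -/
import Mathlib

section
/- If A has full column rank, B has full row rank, and C is invertible, then the Moore-Penrose pseudo-inverse of the product satisfies (ACB)⁺ = B⁺ C⁻¹ A⁺. -/
open Matrix

/-- `Mp` is the Moore-Penrose pseudo-inverse of `M`. -/
def IsMoorePenrose {m n : Type*} [Fintype m] [Fintype n]
    (M : Matrix m n ℝ) (Mp : Matrix n m ℝ) : Prop :=
  M * Mp * M = M ∧ Mp * M * Mp = Mp ∧ (M * Mp)ᵀ = M * Mp ∧ (Mp * M)ᵀ = Mp * M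

/-- A square matrix with full rank is a unit. -/
lemma isUnit_of_rank_eq {n : ℕ} (M : Matrix (Fin n) (Fin n) ℝ) (h : M.rank = n) :
    IsUnit M := by
  rw [← Matrix.mulVec_surjective_iff_isUnit]
  have htop : LinearMap.range M.mulVecLin = ⊤ := by
    apply Submodule.eq_top_of_finrank_eq
    rw [← Matrix.rank, h]
    simp [Module.finrank_pi]
  intro v
  have := htop ▸ Submodule.mem_top (R := ℝ) (x := v)
  obtain ⟨x, hx⟩ := this
  exact ⟨x, hx⟩

/-- Uniqueness of the Moore-Penrose pseudoinverse. -/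
lemma moorePenrose_unique {m n : Type*} [Fintype m] [Fintype n]
    (M : Matrix m n ℝ) (P Q : Matrix n m ℝ)
    (hP : IsMoorePenrose M P) (hQ : IsMoorePenrose M Q) : P = Q := by
  obtain ⟨hP1, hP2, hP3, hP4⟩ := hP
  obtain ⟨hQ1, hQ2, hQ3, hQ4⟩ := hQ
  have hMP : M * P = M * Q := by
    calc M * P = (M * P)ᵀ := hP3.symm
    _ = Pᵀ * Mᵀ := by rw [Matrix.transpose_mul]
    _ = Pᵀ * (M * Q * M)ᵀ := by rw [hQ1]
    _ = Pᵀ * (Mᵀ * (M * Q)ᵀ) := by rw [Matrix.transpose_mul]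
    _ = (Pᵀ * Mᵀ) * (M * Q) := by rw [hQ3, ← Matrix.mul_assoc]
    _ = (M * P)ᵀ * (M * Q) := by rw [Matrix.transpose_mul]
    _ = M * P * (M * Q) := by rw [hP3]
    _ = (M * P * M) * Q := by simp only [Matrix.mul_assoc]
    _ = M * Q := by rw [hP1]
  have hPM : P * M = Q * M := by
    calc P * M = (P * M)ᵀ := hP4.symm
    _ = Mᵀ * Pᵀ := by rw [Matrix.transpose_mul]
    _ = (M * Q * M)ᵀ * Pᵀ := by rw [hQ1]
    _ = (Q * M)ᵀ * Mᵀ * Pᵀ := by simp only [Matrix.transpose_mul, Matrix.mul_assoc]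
    _ = Q * M * (Mᵀ * Pᵀ) := by rw [hQ4, Matrix.mul_assoc]
    _ = Q * M * (P * M)ᵀ := by rw [Matrix.transpose_mul]
    _ = Q * (M * P * M) := by rw [hP4, Matrix.mul_assoc, Matrix.mul_assoc]
    _ = Q * M := by rw [hP1]
  calc P = P * M * P := hP2.symm
  _ = Q * M * P := by rw [hPM]
  _ = Q * (M * P) := by rw [Matrix.mul_assoc]
  _ = Q * (M * Q) := by rw [hMP]
  _ = Q * M * Q := by rw [Matrix.mul_assoc]
  _ = Q := hQ2

/-- If `A` has full column rank, `B` has full row rank and `C` is invertible, then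
`(A C B)⁺ = B⁺ C⁻¹ A⁺`. -/
theorem reverse_order_law {m n p : ℕ}
    (A : Matrix (Fin m) (Fin n) ℝ) (C : Matrix (Fin n) (Fin n) ℝ)
    (B : Matrix (Fin n) (Fin p) ℝ)
    (hA : A.rank = n) (hC : IsUnit C.det) (hB : B.rank = n)
    (Ap : Matrix (Fin n) (Fin m) ℝ) (Bp : Matrix (Fin p) (Fin n) ℝ)
    (P : Matrix (Fin p) (Fin m) ℝ)
    (hAp : IsMoorePenrose A Ap) (hBp : IsMoorePenrose B Bp)
    (hP : IsMoorePenrose (A * C * B) P) :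
    P = Bp * C⁻¹ * Ap := by
  obtain ⟨hA1, hA2, hA3, hA4⟩ := hAp
  obtain ⟨hB1, hB2, hB3, hB4⟩ := hBp
  -- Aᵀ A is invertible
  have hAtA : IsUnit (Aᵀ * A) :=
    isUnit_of_rank_eq _ (by rw [Matrix.rank_transpose_mul_self, hA])
  have hBBt : IsUnit (B * Bᵀ) :=
    isUnit_of_rank_eq _ (by rw [Matrix.rank_self_mul_transpose, hB])
  -- Ap * A = 1
  have hApA : Ap * A = 1 := by
    have h : Aᵀ * A * (Ap * A) = Aᵀ * A * 1 := by
      rw [Matrix.mul_one, Matrix.mul_assoc, ← Matrix.mul_assoc A Ap A, hA1]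
    exact hAtA.mul_left_cancel h
  -- B * Bp = 1
  have hBBp : B * Bp = 1 := by
    have h : (B * Bp) * (B * Bᵀ) = 1 * (B * Bᵀ) := by
      rw [Matrix.one_mul, ← Matrix.mul_assoc, hB1]
    exact hBBt.mul_right_cancel h
  have hCC : C * C⁻¹ = 1 := Matrix.mul_nonsing_inv C hC
  have hCC' : C⁻¹ * C = 1 := Matrix.nonsing_inv_mul C hC
  set Q := Bp * C⁻¹ * Ap with hQdef
  have hMQ : A * C * B * Q = A * Ap := by
    rw [hQdef]
    calc A * C * B * (Bp * C⁻¹ * Ap)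
        = A * C * (B * Bp) * C⁻¹ * Ap := by
          simp only [Matrix.mul_assoc]
    _ = A * (C * C⁻¹) * Ap := by rw [hBBp]; simp only [Matrix.mul_assoc, Matrix.one_mul]
    _ = A * Ap := by rw [hCC]; simp only [Matrix.mul_assoc, Matrix.one_mul, Matrix.mul_one]
  have hQM : Q * (A * C * B) = Bp * B := by
    rw [hQdef]
    calc Bp * C⁻¹ * Ap * (A * C * B)
        = Bp * C⁻¹ * (Ap * A) * C * B := by simp only [Matrix.mul_assoc]
    _ = Bp * (C⁻¹ * C) * B := by rw [hApA]; simp only [Matrix.mul_assoc, Matrix.one_mul]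
    _ = Bp * B := by rw [hCC']; simp only [Matrix.mul_one, Matrix.one_mul]
  have hQMP : IsMoorePenrose (A * C * B) Q := by
    refine ⟨?_, ?_, ?_, ?_⟩
    · rw [hMQ]
      calc A * Ap * (A * C * B) = (A * Ap * A) * C * B := by simp only [Matrix.mul_assoc]
      _ = A * C * B := by rw [hA1]
    · rw [hQM, hQdef]
      calc Bp * B * (Bp * C⁻¹ * Ap) = (Bp * B * Bp) * C⁻¹ * Ap := by
            simp only [Matrix.mul_assoc]
      _ = Bp * C⁻¹ * Ap := by rw [hB2]
    · rw [hMQ]; exact hA3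
    · rw [hQM]; exact hB4
  exact moorePenrose_unique _ _ _ hP hQMP
end

section
/- Let I_c be a symmetric positive definite r×r matrix and T an r×n matrix of full row rank. Then for any vector v ∈ ℝ^r, vᵀ I_c⁻¹ v = (Tᵀ v)ᵀ (Tᵀ I_c T)⁺ (Tᵀ v). In other words, the quadratic form of the inverse of I_c applied to v equals the quadratic form of the pseudo-inverse of the transformed matrix Tᵀ I_c T applied to the transformed vector Tᵀ v. -/
open Matrix

/-- A matrix of full row rank has a right inverse. -/
lemma exists_right_inverse_of_rank {r n : ℕ} (T : Matrix (Fin r) (Fin n) ℝ)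
    (hT : T.rank = r) : ∃ S : Matrix (Fin n) (Fin r) ℝ, T * S = 1 := by
  have hsurj : Function.Surjective T.mulVecLin := by
    rw [← LinearMap.range_eq_top]
    apply Submodule.eq_top_of_finrank_eq
    rw [← Matrix.rank, hT, Module.finrank_pi, Fintype.card_fin]
  choose f hf using hsurj
  refine ⟨Matrix.of fun j i => f (Pi.single i 1) j, ?_⟩
  ext k i
  have := congrFun (hf (Pi.single i 1)) k
  simp only [Matrix.mulVecLin_apply, Matrix.mulVec, dotProduct] at this
  simp only [Matrix.mul_apply, Matrix.of_apply, Matrix.one_apply]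
  rw [this]
  by_cases h : k = i <;> simp [Pi.single_apply, h, eq_comm]

/-- Theorem 1 of the paper: the delta-method prediction variance of a Category-1
overparameterized model equals that of the canonical model. -/
theorem quadForm_pinv_eq {r n : ℕ}
    (Ic : Matrix (Fin r) (Fin r) ℝ) (hIc : Ic.PosDef)
    (T : Matrix (Fin r) (Fin n) ℝ) (hrn : r ≤ n) (hT : T.rank = r)
    (P : Matrix (Fin n) (Fin n) ℝ) (hP : IsMoorePenrose (Tᵀ * Ic * T) P)
    (v : Fin r → ℝ) :
    v ⬝ᵥ (Ic⁻¹ *ᵥ v) = (Tᵀ *ᵥ v) ⬝ᵥ (P *ᵥ (Tᵀ *ᵥ v)) := by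
  obtain ⟨S, hS⟩ := exists_right_inverse_of_rank T hT
  have hd : IsUnit Ic.det := (Matrix.isUnit_iff_isUnit_det Ic).mp hIc.isUnit
  have e : Sᵀ * Tᵀ = (1 : Matrix (Fin r) (Fin r) ℝ) := by
    rw [← Matrix.transpose_mul, hS, Matrix.transpose_one]
  have e2 : ∀ X : Matrix (Fin r) (Fin r) ℝ, Sᵀ * (Tᵀ * X) = X := fun X => by
    rw [← Matrix.mul_assoc, e, Matrix.one_mul]
  have h2 := congrArg (fun X => Sᵀ * (X * S)) hP.1
  simp only [Matrix.mul_assoc] at h2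
  rw [hS] at h2
  simp only [Matrix.mul_one] at h2
  rw [e2, e2] at h2
  -- h2 : Ic * (T * (P * (Tᵀ * Ic))) = Ic
  have h3 := congrArg (fun X => Ic⁻¹ * (X * Ic⁻¹)) h2
  simp only [Matrix.mul_assoc] at h3
  rw [Matrix.mul_nonsing_inv _ hd] at h3
  simp only [Matrix.mul_one] at h3
  rw [Matrix.nonsing_inv_mul_cancel_left _ _ hd] at h3
  -- h3 : T * (P * Tᵀ) = Ic⁻¹
  rw [mulVec_transpose, ← dotProduct_mulVec, mulVec_vecMul, mulVec_mulVec,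
    ← Matrix.mul_assoc, Matrix.mul_assoc, h3]
end

section
/- Under the setting of the previous decomposition (Φᵀ = [Φ_cᵀ, Φ_oᵀ], Φ Φᵀ invertible, Φ_c full row rank), for every vector φ = (φ_c, φ_o), the prediction variance of the overparameterized model is at least that of the canonical model: φᵀ (Φ Φᵀ)⁻¹ φ ≥ φ_cᵀ (Φ_c Φ_cᵀ)⁻¹ φ_c. -/
open Matrix

private lemma dot_self_nonneg {n : ℕ} (y : Fin n → ℝ) : 0 ≤ y ⬝ᵥ y :=
  Finset.sum_nonneg fun i _ => mul_self_nonneg (y i)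

/-- Least-norm lower bound: if `Φc w = φc` and `Φc Φcᵀ` is invertible, then
`φcᵀ (Φc Φcᵀ)⁻¹ φc ≤ ‖w‖²`. -/
private lemma min_norm_bound {r N : ℕ} (Φc : Matrix (Fin r) (Fin N) ℝ)
    (hA : IsUnit (Φc * Φcᵀ).det) (φc : Fin r → ℝ) (w : Fin N → ℝ)
    (hw : Φc *ᵥ w = φc) :
    φc ⬝ᵥ ((Φc * Φcᵀ)⁻¹ *ᵥ φc) ≤ w ⬝ᵥ w := by
  set u : Fin r → ℝ := (Φc * Φcᵀ)⁻¹ *ᵥ φc with hu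
  set w₀ : Fin N → ℝ := Φcᵀ *ᵥ u with hw₀
  have h1 : Φc *ᵥ w₀ = φc := by
    rw [hw₀, mulVec_mulVec, hu, mulVec_mulVec, Matrix.mul_nonsing_inv _ hA, one_mulVec]
  have key : ∀ z : Fin N → ℝ, w₀ ⬝ᵥ z = u ⬝ᵥ (Φc *ᵥ z) := by
    intro z
    rw [hw₀, mulVec_transpose, ← dotProduct_mulVec]
  have h2 : φc ⬝ᵥ u = w₀ ⬝ᵥ w₀ := by
    rw [key w₀, h1, dotProduct_comm]
  have h3 : w₀ ⬝ᵥ w = w₀ ⬝ᵥ w₀ := by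
    rw [key w, hw, key w₀, h1]
  have h4 : 0 ≤ (w - w₀) ⬝ᵥ (w - w₀) := dot_self_nonneg _
  have h5 : (w - w₀) ⬝ᵥ (w - w₀)
      = w ⬝ᵥ w - 2 * (w₀ ⬝ᵥ w) + w₀ ⬝ᵥ w₀ := by
    simp only [sub_dotProduct, dotProduct_sub]
    rw [dotProduct_comm w w₀]
    ring
  rw [h2]
  nlinarith [h4, h5, h3]

/-- Theorem 2 (main inequality): the prediction variance of the overparameterized model
is at least that of the canonical model. -/
theorem overparam_variance_ge {r k N : ℕ}
    (Φc : Matrix (Fin r) (Fin N) ℝ) (Φo : Matrix (Fin k) (Fin N) ℝ)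
    (Φ : Matrix (Fin r ⊕ Fin k) (Fin N) ℝ) (hΦdef : Φ = Matrix.of (Sum.elim Φc Φo))
    (hΦc : Φc.rank = r) (hΦ : IsUnit (Φ * Φᵀ).det)
    (φc : Fin r → ℝ) (φo : Fin k → ℝ) :
    φc ⬝ᵥ ((Φc * Φcᵀ)⁻¹ *ᵥ φc) ≤
      (Sum.elim φc φo) ⬝ᵥ ((Φ * Φᵀ)⁻¹ *ᵥ (Sum.elim φc φo)) := by
  -- A = Φc Φcᵀ is invertible since Φc has full row rank
  have hArank : (Φc * Φcᵀ).rank = Fintype.card (Fin r) := by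
    rw [Matrix.rank_self_mul_transpose, hΦc, Fintype.card_fin]
  have hAsurj : Function.Surjective ((Φc * Φcᵀ).mulVec) := by
    have htop : LinearMap.range (Φc * Φcᵀ).mulVecLin = ⊤ := by
      apply Submodule.eq_top_of_finrank_eq
      rw [← Matrix.rank, hArank, Fintype.card_fin, Module.finrank_fintype_fun_eq_card,
        Fintype.card_fin]
    intro y
    obtain ⟨x, hx⟩ := (LinearMap.range_eq_top.mp htop) y
    exact ⟨x, hx⟩
  have hAunit : IsUnit (Φc * Φcᵀ).det :=
    (Matrix.isUnit_iff_isUnit_det _).mp (Matrix.mulVec_surjective_iff_isUnit.mp hAsurj)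
  -- the key vector w
  set x : Fin r ⊕ Fin k → ℝ := Sum.elim φc φo with hx
  set v : Fin r ⊕ Fin k → ℝ := (Φ * Φᵀ)⁻¹ *ᵥ x with hv
  set w : Fin N → ℝ := Φᵀ *ᵥ v with hwdef
  have hGv : Φ *ᵥ w = x := by
    rw [hwdef, hv, mulVec_mulVec, mulVec_mulVec,
      Matrix.mul_nonsing_inv _ hΦ, one_mulVec]
  have hΦcw : Φc *ᵥ w = φc := by
    funext i
    have := congrFun hGv (Sum.inl i)
    simp [hΦdef, hx, mulVec, dotProduct] at this
    exact this
  have hval : x ⬝ᵥ ((Φ * Φᵀ)⁻¹ *ᵥ x) = w ⬝ᵥ w := by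
    calc x ⬝ᵥ ((Φ * Φᵀ)⁻¹ *ᵥ x) = x ⬝ᵥ v := by rw [hv]
    _ = (Φ *ᵥ w) ⬝ᵥ v := by rw [hGv]
    _ = v ⬝ᵥ (Φ *ᵥ w) := dotProduct_comm _ _
    _ = (v ᵥ* Φ) ⬝ᵥ w := dotProduct_mulVec _ _ _
    _ = (Φᵀ *ᵥ v) ⬝ᵥ w := by rw [← mulVec_transpose]
    _ = w ⬝ᵥ w := by rw [← hwdef]
  rw [hval]
  exact min_norm_bound Φc hAunit φc w hΦcw
end

section
/- Under the setting of Theorem 2's decomposition, equality φᵀ (Φ Φᵀ)⁻¹ φ = φ_cᵀ (Φ_c Φ_cᵀ)⁻¹ φ_c holds if and only if φ_o = K φ_c, where K = Φ_o Φ_cᵀ (Φ_c Φ_cᵀ)⁻¹. -/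
open Matrix

lemma dot_mulVec_key {m n : Type*} [Fintype m] [Fintype n] (M : Matrix m n ℝ)
    (x : m → ℝ) (y : n → ℝ) : x ⬝ᵥ M *ᵥ y = Mᵀ *ᵥ x ⬝ᵥ y := by
  rw [dotProduct_mulVec, mulVec_transpose]

lemma quad_identity {r k : ℕ} (P : Matrix (Fin r) (Fin r) ℝ) (T : Matrix (Fin k) (Fin k) ℝ)
    (B : Matrix (Fin r) (Fin k) ℝ) (C : Matrix (Fin k) (Fin r) ℝ)
    (hP : Pᵀ = P) (hT : Tᵀ = T) (hBC : Cᵀ = B) (φc : Fin r → ℝ) (φo : Fin k → ℝ) :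
    Sum.elim φc φo ⬝ᵥ
      (fromBlocks (P + P*B*T*C*P) (-(P*B*T)) (-(T*C*P)) T) *ᵥ Sum.elim φc φo
    = φc ⬝ᵥ P *ᵥ φc
      + (φo - (C*P) *ᵥ φc) ⬝ᵥ T *ᵥ (φo - (C*P) *ᵥ φc) := by
  have hB : Bᵀ = C := by rw [← hBC, transpose_transpose]
  have h1 : φc ⬝ᵥ (P*(B*T)) *ᵥ φo = ((C*P) *ᵥ φc) ⬝ᵥ T *ᵥ φo := by
    rw [dot_mulVec_key, dot_mulVec_key, mulVec_mulVec]
    congr 1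
    simp [transpose_mul, hP, hT, hB, Matrix.mul_assoc]
  have h2 : φc ⬝ᵥ (P*(B*(T*(C*P)))) *ᵥ φc = ((C*P) *ᵥ φc) ⬝ᵥ (T*(C*P)) *ᵥ φc := by
    rw [dot_mulVec_key, dot_mulVec_key, mulVec_mulVec]
    congr 1
    simp [transpose_mul, hP, hT, hB, Matrix.mul_assoc]
  simp only [fromBlocks_mulVec, sumElim_dotProduct_sumElim, add_mulVec, neg_mulVec,
    mulVec_sub, dotProduct_add, dotProduct_sub, dotProduct_neg, sub_dotProduct,
    mulVec_mulVec, Sum.elim_comp_inl, Sum.elim_comp_inr, Matrix.mul_assoc]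
  rw [h1, h2]
  ring

/-- Equality case of Theorem 2: the variances coincide iff `φ_o = K φ_c`. -/
theorem overparam_variance_eq_iff {r k N : ℕ}
    (Φc : Matrix (Fin r) (Fin N) ℝ) (Φo : Matrix (Fin k) (Fin N) ℝ)
    (Φ : Matrix (Fin r ⊕ Fin k) (Fin N) ℝ) (hΦdef : Φ = Matrix.of (Sum.elim Φc Φo))
    (hΦc : Φc.rank = r) (hΦ : IsUnit (Φ * Φᵀ).det)
    (hRo : (Φo * ((1 : Matrix (Fin N) (Fin N) ℝ) - Φcᵀ * (Φc * Φcᵀ)⁻¹ * Φc) * Φoᵀ).PosDef)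
    (φc : Fin r → ℝ) (φo : Fin k → ℝ) :
    (Sum.elim φc φo) ⬝ᵥ ((Φ * Φᵀ)⁻¹ *ᵥ (Sum.elim φc φo)) =
      φc ⬝ᵥ ((Φc * Φcᵀ)⁻¹ *ᵥ φc) ↔
      φo = (Φo * Φcᵀ * (Φc * Φcᵀ)⁻¹) *ᵥ φc := by
  set A := Φc * Φcᵀ with hAdef
  set B := Φc * Φoᵀ with hBdef
  set C := Φo * Φcᵀ with hCdef
  set D := Φo * Φoᵀ with hDdef
  -- A is invertible from full row rank
  have hArank : A.rank = r := by rw [hAdef, rank_self_mul_transpose, hΦc]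
  have hAunit : IsUnit A := by
    rw [← Matrix.mulVec_surjective_iff_isUnit]
    have hrange : LinearMap.range A.mulVecLin = ⊤ := by
      apply Submodule.eq_top_of_finrank_eq
      rw [← Matrix.rank, hArank]
      simp [Module.finrank_fintype_fun_eq_card]
    intro v
    obtain ⟨x, hx⟩ := LinearMap.range_eq_top.mp hrange v
    exact ⟨x, hx⟩
  haveI : Invertible A := hAunit.nonempty_invertible.some
  have hiA : ⅟A = A⁻¹ := invOf_eq_nonsing_inv A
  -- the Schur complement
  have hSchur : D - C * A⁻¹ * B =
      Φo * ((1 : Matrix (Fin N) (Fin N) ℝ) - Φcᵀ * (Φc * Φcᵀ)⁻¹ * Φc) * Φoᵀ := by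
    rw [Matrix.mul_sub, Matrix.mul_one, Matrix.sub_mul]
    simp only [hDdef, hCdef, hBdef, Matrix.mul_assoc]
    rfl
  have hSpd : (D - C * A⁻¹ * B).PosDef := by rw [hSchur]; exact hRo
  haveI : Invertible (D - C * ⅟A * B) := by
    rw [hiA]; exact hSpd.isUnit.nonempty_invertible.some
  -- block structure
  have hblock : Φ * Φᵀ = fromBlocks A B C D := by
    rw [hΦdef]
    show fromRows Φc Φo * (fromRows Φc Φo)ᵀ = _
    rw [transpose_fromRows, fromRows_mul_fromCols]
  haveI : Invertible (Φ * Φᵀ) := Matrix.invertibleOfIsUnitDet _ hΦ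
  haveI : Invertible (fromBlocks A B C D) := hblock ▸ ‹Invertible (Φ * Φᵀ)›
  -- the explicit inverse
  have hinv : (Φ * Φᵀ)⁻¹ =
      fromBlocks (A⁻¹ + A⁻¹*B*(D - C*A⁻¹*B)⁻¹*C*A⁻¹) (-(A⁻¹*B*(D - C*A⁻¹*B)⁻¹))
        (-((D - C*A⁻¹*B)⁻¹*C*A⁻¹)) ((D - C*A⁻¹*B)⁻¹) := by
    rw [hblock, ← invOf_eq_nonsing_inv, invOf_fromBlocks₁₁_eq]
    simp only [invOf_eq_nonsing_inv]
  -- symmetry facts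
  have hAsymm : Aᵀ = A := by rw [hAdef, transpose_mul, transpose_transpose]
  have hPsymm : (A⁻¹)ᵀ = A⁻¹ := by rw [transpose_nonsing_inv, hAsymm]
  have hBC : Cᵀ = B := by rw [hCdef, hBdef, transpose_mul, transpose_transpose]
  have hCB : Bᵀ = C := by rw [← hBC, transpose_transpose]
  have hDsymm : Dᵀ = D := by rw [hDdef, transpose_mul, transpose_transpose]
  have hTsymm : ((D - C*A⁻¹*B)⁻¹)ᵀ = (D - C*A⁻¹*B)⁻¹ := by
    rw [transpose_nonsing_inv, transpose_sub, hDsymm, transpose_mul, hCB, transpose_mul,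
      hPsymm, hBC, ← Matrix.mul_assoc]
  have hquad := quad_identity (A⁻¹) ((D - C*A⁻¹*B)⁻¹) B C hPsymm hTsymm hBC φc φo
  rw [hinv, hquad]
  -- positivity of the inverse Schur complement
  have hTpd : ((D - C*A⁻¹*B)⁻¹).PosDef := hSpd.inv
  rw [add_eq_left]
  constructor
  · intro h
    have hw : φo - (C * A⁻¹) *ᵥ φc = 0 := by
      by_contra hwne
      have := hTpd.dotProduct_mulVec_pos hwne
      rw [star_trivial] at this
      linarith
    exact sub_eq_zero.mp hw
  · intro h
    have hw : φo - (C * A⁻¹) *ᵥ φc = 0 := sub_eq_zero.mpr h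
    rw [hw]
    simp
end

section
/- Let Φ_c ∈ ℝ^{r×N} have full row rank and let T ∈ ℝ^{r×n} have full row rank with Φ = Tᵀ Φ_c. Then for every input vector x represented by its canonical regressor φ_c and overparameterized regressor φ = Tᵀ φ_c, the quantity φᵀ (Φ Φᵀ)⁺ φ is independent of the choice of T; specifically it always equals φ_cᵀ (Φ_c Φ_cᵀ)⁻¹ φ_c. -/
open Matrix

lemma isUnit_of_rank_eq_card {k : ℕ} (M : Matrix (Fin k) (Fin k) ℝ)
    (h : M.rank = k) : IsUnit M := by
  rw [← Matrix.mulVec_surjective_iff_isUnit]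
  have : LinearMap.range M.mulVecLin = ⊤ := by
    apply Submodule.eq_top_of_finrank_eq
    rw [← Matrix.rank, h]
    simp [Module.finrank_fintype_fun_eq_card]
  intro y
  exact (LinearMap.range_eq_top.mp this) y

/-- Theorem 1 in matrix form: the delta-method prediction variance of any Category-1
overparameterization coincides with the canonical one. -/
theorem category1_variance_invariant {r n N : ℕ}
    (Φc : Matrix (Fin r) (Fin N) ℝ) (hΦc : Φc.rank = r)
    (T : Matrix (Fin r) (Fin n) ℝ) (hT : T.rank = r)
    (Φ : Matrix (Fin n) (Fin N) ℝ) (hΦ : Φ = Tᵀ * Φc)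
    (φc : Fin r → ℝ)
    (P : Matrix (Fin n) (Fin n) ℝ) (hP : IsMoorePenrose (Φ * Φᵀ) P) :
    (Tᵀ *ᵥ φc) ⬝ᵥ (P *ᵥ (Tᵀ *ᵥ φc)) = φc ⬝ᵥ ((Φc * Φcᵀ)⁻¹ *ᵥ φc) := by
  set A : Matrix (Fin r) (Fin r) ℝ := Φc * Φcᵀ with hA
  have hAunit : IsUnit A := by
    apply isUnit_of_rank_eq_card
    rw [hA, Φc.rank_self_mul_transpose, hΦc]
  have hTTunit : IsUnit (T * Tᵀ) := by
    apply isUnit_of_rank_eq_card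
    rw [T.rank_self_mul_transpose, hT]
  have hours : Φ * Φᵀ = Tᵀ * A * T := by
    rw [hΦ, hA, Matrix.transpose_mul, Matrix.transpose_transpose]
    simp only [Matrix.mul_assoc]
  have h1 : Tᵀ * A * T * P * (Tᵀ * A * T) = Tᵀ * A * T := by
    rw [← hours]; exact hP.1
  have hTT : (T * Tᵀ) * (T * Tᵀ)⁻¹ = 1 :=
    Matrix.mul_nonsing_inv _ ((Matrix.isUnit_iff_isUnit_det _).mp hTTunit)
  have hTT' : (T * Tᵀ)⁻¹ * (T * Tᵀ) = 1 :=
    Matrix.nonsing_inv_mul _ ((Matrix.isUnit_iff_isUnit_det _).mp hTTunit)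
  have h2 : A * (T * P * Tᵀ) * A = A := by
    have key := congrArg (fun M => (T * Tᵀ)⁻¹ * (T * M * Tᵀ) * (T * Tᵀ)⁻¹) h1
    have lhs_eq : (T * Tᵀ)⁻¹ * (T * (Tᵀ * A * T * P * (Tᵀ * A * T)) * Tᵀ) * (T * Tᵀ)⁻¹
        = A * (T * P * Tᵀ) * A := by
      have : T * (Tᵀ * A * T * P * (Tᵀ * A * T)) * Tᵀ
          = (T * Tᵀ) * (A * (T * P * Tᵀ) * A) * (T * Tᵀ) := by
        simp only [Matrix.mul_assoc]
      rw [this]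
      calc (T * Tᵀ)⁻¹ * ((T * Tᵀ) * (A * (T * P * Tᵀ) * A) * (T * Tᵀ)) * (T * Tᵀ)⁻¹
          = ((T * Tᵀ)⁻¹ * (T * Tᵀ)) * (A * (T * P * Tᵀ) * A) * ((T * Tᵀ) * (T * Tᵀ)⁻¹) := by
            simp only [Matrix.mul_assoc]
        _ = A * (T * P * Tᵀ) * A := by rw [hTT, hTT', Matrix.one_mul, Matrix.mul_one]
    have rhs_eq : (T * Tᵀ)⁻¹ * (T * (Tᵀ * A * T) * Tᵀ) * (T * Tᵀ)⁻¹ = A := by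
      have : T * (Tᵀ * A * T) * Tᵀ = (T * Tᵀ) * A * (T * Tᵀ) := by
        simp only [Matrix.mul_assoc]
      rw [this]
      calc (T * Tᵀ)⁻¹ * ((T * Tᵀ) * A * (T * Tᵀ)) * (T * Tᵀ)⁻¹
          = ((T * Tᵀ)⁻¹ * (T * Tᵀ)) * A * ((T * Tᵀ) * (T * Tᵀ)⁻¹) := by
            simp only [Matrix.mul_assoc]
        _ = A := by rw [hTT, hTT', Matrix.one_mul, Matrix.mul_one]
    rw [← lhs_eq, key, rhs_eq]
  have hAdet := (Matrix.isUnit_iff_isUnit_det _).mp hAunit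
  have hAinv : A * A⁻¹ = 1 := Matrix.mul_nonsing_inv _ hAdet
  have hAinv' : A⁻¹ * A = 1 := Matrix.nonsing_inv_mul _ hAdet
  have hkey : T * P * Tᵀ = A⁻¹ := by
    calc T * P * Tᵀ
        = (A⁻¹ * A) * (T * P * Tᵀ) * (A * A⁻¹) := by
          rw [hAinv, hAinv', Matrix.one_mul, Matrix.mul_one]
      _ = A⁻¹ * (A * (T * P * Tᵀ) * A) * A⁻¹ := by simp only [Matrix.mul_assoc]
      _ = A⁻¹ * A * A⁻¹ := by rw [h2, Matrix.mul_assoc]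
      _ = A⁻¹ := by rw [hAinv', Matrix.one_mul]
  calc (Tᵀ *ᵥ φc) ⬝ᵥ (P *ᵥ (Tᵀ *ᵥ φc))
      = (φc ᵥ* T) ⬝ᵥ ((P * Tᵀ) *ᵥ φc) := by
        rw [Matrix.mulVec_mulVec, Matrix.mulVec_transpose]
    _ = φc ⬝ᵥ ((T * (P * Tᵀ)) *ᵥ φc) := by
        rw [Matrix.dotProduct_mulVec, Matrix.vecMul_vecMul, ← Matrix.dotProduct_mulVec]
    _ = φc ⬝ᵥ (A⁻¹ *ᵥ φc) := by rw [← Matrix.mul_assoc, hkey]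
end
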